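/- For k ∈ ℕ and 0 ≤ x ≤ (k+2)/2, one has x^{k+1} e^{-x}/(k+1)! ≤ P(k+1, x) ≤ 2 x^{k+1} e^{-x}/(k+1)!, with equality only at x = 0. -/

import Mathlib

open Real

/-- Lower regularized incomplete gamma function P(a,x) = γ(a,x)/Γ(a). -/
noncomputable def regGammaP (a x : ℝ) : ℝ :=
  (∫ t in (0:ℝ)..x, t ^ (a - 1) * Real.exp (-t)) / Real.Gamma a

open Finset Nat

/-! For natural `k`, `P(k+1, x) = 1 - e^{-x} ∑_{m ≤ k} x^m/m!` is `e^{-x}` times the tail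
`∑_{n > k} x^n/n!` of the exponential series. The tail is at least its first term, and for
`x ≤ (k+2)/2` each later term is at most half the previous one, so the tail is at most twice its
first term. -/

theorem hasDerivAt_sum_range_pow_div_factorial (n : ℕ) (t : ℝ) :
    HasDerivAt (fun t : ℝ => ∑ m ∈ range (n + 1), t ^ m / m !)
      (∑ m ∈ range n, t ^ m / m !) t := by
  have h := HasDerivAt.fun_sum (u := range (n + 1)) fun m _ =>
    (hasDerivAt_pow m t).div_const (m ! : ℝ)
  refine h.congr_deriv ?_
  rw [sum_range_succ', Nat.cast_zero, zero_mul, zero_div, add_zero]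
  refine sum_congr rfl fun m _ => ?_
  rw [Nat.add_sub_cancel, factorial_succ]
  push_cast
  field_simp

theorem integral_pow_mul_exp_neg (k : ℕ) (x : ℝ) :
    ∫ t in (0:ℝ)..x, t ^ k * exp (-t) =
      k ! * (1 - exp (-x) * ∑ m ∈ range (k + 1), x ^ m / m !) := by
  have hderiv (t : ℝ) :
      HasDerivAt (fun t => -(k ! * (exp (-t) * ∑ m ∈ range (k + 1), t ^ m / m !)))
        (t ^ k * exp (-t)) t := by
    have hexp : HasDerivAt (fun t => exp (-t)) (-exp (-t)) t := by
      simpa using (hasDerivAt_neg t).exp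
    refine ((hexp.mul (hasDerivAt_sum_range_pow_div_factorial k t)).const_mul
      (k ! : ℝ)).neg.congr_deriv ?_
    rw [sum_range_succ]
    field_simp
    ring
  rw [intervalIntegral.integral_eq_sub_of_hasDerivAt (fun t _ => hderiv t)
    ((by fun_prop : Continuous fun t : ℝ => t ^ k * exp (-t)).intervalIntegrable _ _)]
  have hsum_zero : ∑ m ∈ range (k + 1), (0 : ℝ) ^ m / m ! = 1 := by simp [sum_range_succ']
  rw [hsum_zero, neg_zero, exp_zero]
  ring

theorem regGammaP_natCast_add_one (k : ℕ) (x : ℝ) :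
    regGammaP (k + 1) x = 1 - exp (-x) * ∑ m ∈ range (k + 1), x ^ m / m ! := by
  have hint : ∫ t in (0:ℝ)..x, t ^ ((k + 1 : ℝ) - 1) * exp (-t) =
      ∫ t in (0:ℝ)..x, t ^ k * exp (-t) := by
    simp only [add_sub_cancel_right, rpow_natCast]
  rw [regGammaP, hint, integral_pow_mul_exp_neg, Gamma_nat_eq_factorial]
  field_simp

theorem pow_div_factorial_le_exp_sub_sum {x : ℝ} (hx : 0 ≤ x) (n : ℕ) :
    x ^ n / n ! ≤ exp x - ∑ m ∈ range n, x ^ m / m ! := by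
  have h := sum_le_exp_of_nonneg hx (n + 1)
  rw [sum_range_succ] at h
  linarith

theorem pow_div_factorial_lt_exp_sub_sum {x : ℝ} (hx : 0 < x) (n : ℕ) :
    x ^ n / n ! < exp x - ∑ m ∈ range n, x ^ m / m ! := by
  have h := sum_le_exp_of_nonneg hx.le (n + 2)
  have hpos : 0 < x ^ (n + 1) / (n + 1)! := by positivity
  rw [sum_range_succ, sum_range_succ] at h
  linarith

theorem exp_sub_sum_le_two_mul_pow_div_factorial {x : ℝ} {n : ℕ} (hx : 0 ≤ x)
    (h : x ≤ (n + 1) / 2) :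
    exp x - ∑ m ∈ range n, x ^ m / m ! ≤ 2 * (x ^ n / n !) := by
  have hbound := Complex.exp_bound' (x := (x : ℂ)) (n := n) (by
    rw [Complex.norm_real, norm_of_nonneg hx, succ_eq_add_one, cast_add_one,
      div_le_div_iff₀ (by positivity) two_pos]
    linarith)
  rw [Complex.norm_real, norm_of_nonneg hx, ← Complex.ofReal_exp] at hbound
  norm_cast at hbound
  rw [Real.norm_eq_abs] at hbound
  linarith [le_abs_self (exp x - ∑ m ∈ range n, x ^ m / m !)]

theorem pow_succ_div_factorial_succ (x : ℝ) (n : ℕ) :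
    x ^ (n + 1) / (n + 1)! = x ^ n / n ! * (x / (n + 1)) := by
  rw [pow_succ, factorial_succ]
  push_cast
  field_simp

theorem exp_sub_sum_lt_two_mul_pow_div_factorial {x : ℝ} {n : ℕ} (hx : 0 < x)
    (h : x ≤ (n + 1) / 2) :
    exp x - ∑ m ∈ range n, x ^ m / m ! < 2 * (x ^ n / n !) := by
  -- split off two more terms: the second ratio `x / (n + 2)` is strictly below `1/2`
  have htail :=
    exp_sub_sum_le_two_mul_pow_div_factorial (n := n + 1 + 1) hx.le (by push_cast; linarith)
  rw [sum_range_succ, sum_range_succ] at htail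
  rw [pow_succ_div_factorial_succ x (n + 1), pow_succ_div_factorial_succ x n] at htail
  push_cast at htail
  have ha : 0 < x ^ n / (n ! : ℝ) := by positivity
  have hq₁ : x / (n + 1) ≤ 1 / 2 := by rw [div_le_iff₀ (by positivity)]; linarith
  have hq₂ : x / (n + 1 + 1) < 1 / 2 := by rw [div_lt_iff₀ (by positivity)]; linarith
  linarith [mul_le_mul_of_nonneg_left hq₁ ha.le,
    mul_lt_mul_of_pos_left hq₂ (mul_pos ha (by positivity : 0 < x / (n + 1)))]

theorem regGammaP_bounds (k : ℕ) (x : ℝ) (hx0 : 0 ≤ x) (hx1 : x ≤ (k + 2) / 2) :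
    x ^ (k + 1) * Real.exp (-x) / (k + 1).factorial ≤ regGammaP (k + 1) x ∧
    regGammaP (k + 1) x ≤ 2 * x ^ (k + 1) * Real.exp (-x) / (k + 1).factorial ∧
    (x ≠ 0 →
      x ^ (k + 1) * Real.exp (-x) / (k + 1).factorial < regGammaP (k + 1) x ∧
      regGammaP (k + 1) x < 2 * x ^ (k + 1) * Real.exp (-x) / (k + 1).factorial) := by
  have hP : regGammaP (k + 1) x = exp (-x) * (exp x - ∑ m ∈ range (k + 1), x ^ m / m !) := by
    rw [regGammaP_natCast_add_one, mul_sub, ← exp_add, neg_add_cancel, exp_zero]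
  have hlower : x ^ (k + 1) * exp (-x) / (k + 1)! = exp (-x) * (x ^ (k + 1) / (k + 1)!) := by ring
  have hupper :
      2 * x ^ (k + 1) * exp (-x) / (k + 1)! = exp (-x) * (2 * (x ^ (k + 1) / (k + 1)!)) := by
    ring
  have hx1' : x ≤ ((k + 1 : ℕ) + 1) / 2 := by push_cast; linarith
  have he := exp_pos (-x)
  rw [hP, hlower, hupper]
  refine ⟨by gcongr; exact pow_div_factorial_le_exp_sub_sum hx0 _,
    by gcongr; exact exp_sub_sum_le_two_mul_pow_div_factorial hx0 hx1', fun hx => ?_⟩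
  have hx_pos : 0 < x := hx0.lt_of_ne' hx
  exact ⟨mul_lt_mul_of_pos_left (pow_div_factorial_lt_exp_sub_sum hx_pos _) he,
    mul_lt_mul_of_pos_left (exp_sub_sum_lt_two_mul_pow_div_factorial hx_pos hx1') he⟩
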